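/- Let L be an associative unital ring and suppose 1 = Σᵢ aᵢ r bᵢ is a finite sum with aᵢ, bᵢ ∈ L and r ∈ L. Then for every x ∈ L, the elementary matrix E₁₂(x) in E₃(L) is a product of conjugates (by elements of E₃(L)) of the matrices E₁₂(r), E₁₃(r), E₂₃(r) and their inverses. -/

import Mathlib

open Matrix

/-- The elementary subgroup `E₃(L)` of `GL₃(L)`, generated by the elementary matrices
`E_{ij}(a) = I + a·e_{ij}`, `i ≠ j`. -/
def E3 (L : Type) [Ring L] : Subgroup (Matrix (Fin 3) (Fin 3) L)ˣ :=
  Subgroup.closure {U : (Matrix (Fin 3) (Fin 3) L)ˣ |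
    ∃ (i j : Fin 3) (a : L), i ≠ j ∧
      U.val = 1 + Matrix.single i j a}

open scoped commutatorElement

/-!
The set of `c` with `E₁₂(c)` in the normal closure `N` of the three elementary matrices with
entry `r` is an additive subgroup of `L`. It contains every `c r d`: first
`E₁₃(c r) = ⁅E₁₂(c), E₂₃(r)⁆ ∈ N`, then `E₁₂(c r d) = ⁅E₁₃(c r), E₃₂(d)⁆ ∈ N`. Hence it contains
`x = Σ (x aᵢ) r bᵢ`.
-/

namespace Matrix

variable {n : Type*} [Fintype n] [DecidableEq n] {L : Type*} [Ring L] {i j k : n}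

theorem one_add_single_mul_one_add_single (hij : i ≠ j) (a b : L) :
    (1 + single i j a) * (1 + single i j b) = 1 + single i j (a + b) := by
  rw [single_add, add_mul, mul_add, mul_add, single_mul_single_of_ne (h := hij.symm)]
  simp only [mul_one, one_mul, add_zero]
  abel

def elementaryUnits (hij : i ≠ j) : Multiplicative L →* (Matrix n n L)ˣ :=
  MonoidHom.toHomUnits
    { toFun := fun a => 1 + single i j a.toAdd
      map_one' := by simp
      map_mul' := fun a b => (one_add_single_mul_one_add_single hij a.toAdd b.toAdd).symm }

@[simp]
theorem val_elementaryUnits (hij : i ≠ j) (a : Multiplicative L) :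
    (elementaryUnits hij a : Matrix n n L) = 1 + single i j a.toAdd :=
  rfl

@[simp]
theorem val_inv_elementaryUnits (hij : i ≠ j) (a : Multiplicative L) :
    ((elementaryUnits hij a)⁻¹ : (Matrix n n L)ˣ) = (1 + single i j (-a.toAdd) : Matrix n n L) :=
  rfl

theorem commutatorElement_elementaryUnits (hij : i ≠ j) (hjk : j ≠ k) (hik : i ≠ k) (a b : L) :
    ⁅elementaryUnits hij (.ofAdd a), elementaryUnits hjk (.ofAdd b)⁆ =
      elementaryUnits hik (.ofAdd (a * b)) := by
  ext1
  simp only [commutatorElement_def, Units.val_mul, val_elementaryUnits, val_inv_elementaryUnits,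
    toAdd_ofAdd, mul_add, add_mul, mul_one, one_mul, single_mul_single_same, ne_eq, hij.symm,
    hjk.symm, hik.symm, not_false_eq_true, single_mul_single_of_ne, add_zero, mul_neg, neg_mul,
    ← single_neg]
  abel

end Matrix

namespace E3

variable {L : Type} [Ring L] {i j k : Fin 3}

def elementary (hij : i ≠ j) : Multiplicative L →* E3 L :=
  (elementaryUnits hij).codRestrict (E3 L) fun a => Subgroup.subset_closure ⟨i, j, a, hij, rfl⟩

theorem commutatorElement_elementary (hij : i ≠ j) (hjk : j ≠ k) (hik : i ≠ k) (a b : L) :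
    ⁅elementary hij (.ofAdd a), elementary hjk (.ofAdd b)⁆ = elementary hik (.ofAdd (a * b)) :=
  Subtype.ext <| commutatorElement_elementaryUnits hij hjk hik a b

variable {N : Subgroup (E3 L)} [N.Normal]

theorem elementary_mul_mul_mem (hij : i ≠ j) (hjk : j ≠ k) (hik : i ≠ k) {r : L}
    (hr : elementary hjk (.ofAdd r) ∈ N) (c d : L) :
    elementary hij (.ofAdd (c * r * d)) ∈ N := by
  have hcr : elementary hik (.ofAdd (c * r)) ∈ N := by
    rw [← commutatorElement_elementary hij hjk hik]
    exact Subgroup.commutator_le_right _ _ <|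
      Subgroup.commutator_mem_commutator (Subgroup.mem_top _) hr
  rw [← commutatorElement_elementary hik hjk.symm hij]
  exact Subgroup.commutator_le_left _ _ <|
    Subgroup.commutator_mem_commutator hcr (Subgroup.mem_top _)

theorem elementary_mem_of_sum_mul_mul_eq_one (hij : i ≠ j) (hjk : j ≠ k) (hik : i ≠ k)
    {r : L} (hr : elementary hjk (.ofAdd r) ∈ N) {m : ℕ} {a b : Fin m → L}
    (hab : ∑ l, a l * r * b l = 1) (x : L) :
    elementary hij (.ofAdd x) ∈ N := by
  change x ∈ Subgroup.toAddSubgroup' (N.comap (elementary hij))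
  rw [← mul_one x, ← hab, Finset.mul_sum]
  refine AddSubgroup.sum_mem _ fun l _ => ?_
  simp only [← mul_assoc]
  exact elementary_mul_mul_mem hij hjk hik hr (x * a l) (b l)

end E3

/-- If `1 = Σ aᵢ r bᵢ` in `L`, then for every `x ∈ L` the elementary matrix `E₁₂(x)` is a
product of conjugates (by elements of `E₃(L)`) of `E₁₂(r)`, `E₁₃(r)`, `E₂₃(r)` and their
inverses, i.e. it lies in the normal closure of these elements in `E₃(L)`. -/
theorem stmt_14 (L : Type) [Ring L] (r : L)
    (h : ∃ (n : ℕ) (a b : Fin n → L), ∑ i, a i * r * b i = 1)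
    (x : L) (U : (Matrix (Fin 3) (Fin 3) L)ˣ)
    (hU : U.val = 1 + Matrix.single 0 1 x)
    (hUE : U ∈ E3 L) :
    (⟨U, hUE⟩ : E3 L) ∈ Subgroup.normalClosure {u : E3 L |
      u.val.val =
          1 + Matrix.single 0 1 r ∨
      u.val.val =
          1 + Matrix.single 0 2 r ∨
      u.val.val =
          1 + Matrix.single 1 2 r} := by
  obtain ⟨n, a, b, hab⟩ := h
  have hU' : (⟨U, hUE⟩ : E3 L) = E3.elementary (by decide : (0 : Fin 3) ≠ 1) (.ofAdd x) :=
    Subtype.ext (Units.ext hU)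
  rw [hU']
  exact E3.elementary_mem_of_sum_mul_mul_eq_one _ (by decide : (1 : Fin 3) ≠ 2) (by decide)
    (Subgroup.subset_normalClosure (Or.inr (Or.inr rfl))) hab x
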